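/- For every W ∈ 𝒱_n one has W ≠ {0}, and there exists a unique set T_W of pairwise commuting transpositions of S_{n+1} such that W = ⋂_{t∈T_W} V_t. Moreover T_W = {t : t is a transposition of S_{n+1} and W ⊆ V_t}. -/

import Mathlib

/-! Basic setup: type A_n geometric representation, Weyl lines, combinatorics. -/

namespace TLpaper

/-- A permutation is a transposition. -/
def IsTransposition {α : Type} [DecidableEq α] (σ : Equiv.Perm α) : Prop :=
  ∃ a b, a ≠ b ∧ σ = Equiv.swap a b

variable (k : Type) [Field k] [CharZero k] (n : ℕ)

/-- The reflecting hyperplane of a permutation `t` inside `V = {x | ∑ x i = 0}`: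
the set of points of `V` fixed by permuting the coordinates by `t`.  For a
transposition `t = (a b)` this is `{x ∈ V | x a = x b}`. -/
def Hyp (t : Equiv.Perm (Fin (n + 1))) : Set (Fin (n + 1) → k) :=
  {x | (∑ i, x i) = 0 ∧ ∀ i, x (t i) = x i}

/-- A Weyl line: a one-dimensional linear subspace of `V` which is an
intersection of a (possibly empty) family of reflecting hyperplanes. -/
def IsWeylLine (L : Set (Fin (n + 1) → k)) : Prop :=
  (∃ v : Fin (n + 1) → k, v ≠ 0 ∧ L = Set.range fun c : k => c • v) ∧
  ∃ T : Set (Equiv.Perm (Fin (n + 1))),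
    (∀ t ∈ T, IsTransposition t) ∧
    L = {x | (∑ i, x i) = 0} ∩ ⋂ t ∈ T, Hyp k n t

/-- `Z`: the union of all Weyl lines. -/
def ZZ : Set (Fin (n + 1) → k) := ⋃ L ∈ {L | IsWeylLine k n L}, L

/-- `V_t`: the union of all Weyl lines transverse to `t` (i.e. not contained in `H_t`). -/
def Vt (t : Equiv.Perm (Fin (n + 1))) : Set (Fin (n + 1) → k) :=
  ⋃ L ∈ {L | IsWeylLine k n L ∧ ¬L ⊆ Hyp k n t}, L

open Fin.NatCast in
/-- The simple transposition `s_i = (i, i+1)` (0-indexed: it swaps coordinates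
`i` and `i+1` of `Fin (n+1)`, for `i < n`). -/
def simple (i : ℕ) : Equiv.Perm (Fin (n + 1)) :=
  Equiv.swap (i : Fin (n + 1)) ((i + 1 : ℕ) : Fin (n + 1))

/-- `V_i := V_{s_i}`. -/
def Vi (i : ℕ) : Set (Fin (n + 1) → k) := Vt k n (simple n i)

/-- The action of a permutation on a subset of `k^{n+1}` (permuting coordinates). -/
def permSet (σ : Equiv.Perm (Fin (n + 1))) (W : Set (Fin (n + 1) → k)) :
    Set (Fin (n + 1) → k) :=
  (fun x => x ∘ σ) '' W

/-- `i · W := V_i ∩ (W ∪ s_i (W))`. -/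
def dotAct (i : ℕ) (W : Set (Fin (n + 1) → k)) : Set (Fin (n + 1) → k) :=
  Vi k n i ∩ (W ∪ permSet k n (simple n i) W)

/-- The set `W_{i_1 ⋯ i_m}` associated with a sequence of indices. -/
def seqSet : List ℕ → Set (Fin (n + 1) → k)
  | [] => ZZ k n
  | [i] => Vi k n i
  | i :: j :: l => dotAct k n i (seqSet (j :: l))

/-- Membership in the family `𝒱_n`. -/
def memVn (W : Set (Fin (n + 1) → k)) : Prop :=
  ∃ l : List ℕ, l ≠ [] ∧ (∀ i ∈ l, i < n) ∧ W = seqSet k n l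

/-- A set of pairwise commuting transpositions. -/
def CommTranspositions (Q : Set (Equiv.Perm (Fin (n + 1)))) : Prop :=
  (∀ t ∈ Q, IsTransposition t) ∧ ∀ t ∈ Q, ∀ t' ∈ Q, t * t' = t' * t

/-!
The nonzero points of `Z` are the two-valued vectors of sum zero, and such a point lies in
`V_(a b)` exactly when it takes different values at `a` and `b`. So to a matching `M` on
`{0, …, n}` one attaches the set `W(M)` of points of `Z` separating every edge of `M`; then
`W(M) = ⋂_{ab ∈ M} V_(a b)`, and `i · W(M) = W(M')` for an explicit matching `M'`. Hence every
`W ∈ 𝒱_n` is `W(M)` for a nonempty matching `M`, whose transpositions commute. Conversely a set of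
commuting transpositions is a matching, and `W(M)` determines `M`: for a non-edge `ab`, a vector
of sum zero taking one value at `a`, `b` and at one endpoint of each edge of `M` avoiding them, and
another value elsewhere, lies in `W(M)` but not in `V_(a b)`.
-/

section TwoValued

variable {ι β R : Type*}

def TwoValued (x : ι → β) : Prop :=
  ∀ i j l, x i = x j ∨ x i = x l ∨ x j = x l

lemma TwoValued.eq_or_eq {x : ι → β} (hx : TwoValued x) {a b : ι} (hab : x a ≠ x b) (m : ι) :
    x m = x a ∨ x m = x b := by
  grind [TwoValued]

lemma TwoValued.comp {κ : Type*} {x : ι → β} (hx : TwoValued x) (f : κ → ι) :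
    TwoValued (x ∘ f) :=
  fun i j l => hx (f i) (f j) (f l)

lemma twoValued_comp_equiv_iff {κ : Type*} {x : ι → β} (e : κ ≃ ι) :
    TwoValued (x ∘ e) ↔ TwoValued x :=
  ⟨fun h => by simpa [Function.comp_assoc] using h.comp e.symm, fun h => h.comp e⟩

lemma TwoValued.smul [Mul R] {x : ι → R} (hx : TwoValued x) (c : R) : TwoValued (c • x) := by
  intro i j l
  rcases hx i j l with h | h | h <;> simp [h]

lemma twoValued_of_sq_sub_eq_mul [CommRing R] [IsDomain R] {x : ι → R} {μ c : R}
    (h : ∀ m, x m ^ 2 - μ = c * x m) : TwoValued x := by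
  have hsum : ∀ a b, x a ≠ x b → x a + x b = c := fun a b hab => by
    have : (x a - x b) * (x a + x b - c) = 0 := by linear_combination h a - h b
    exact eq_of_sub_eq_zero ((mul_eq_zero.1 this).resolve_left (sub_ne_zero.2 hab))
  intro i j l
  by_contra! hne
  exact hne.2.2 (add_left_cancel ((hsum i j hne.1).trans (hsum i l hne.2.1).symm))

/-- `z` is a multiple of the indicator of the level set of `x` not containing `a`. -/
lemma TwoValued.eq_zero_of_sum_eq_zero [Fintype ι] [Ring R] [NoZeroDivisors R] [CharZero R]
    {x : ι → β} (hx : TwoValued x) {z : ι → R} (hz : ∀ a b, x a = x b → z a = z b)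
    (hs : ∑ i, z i = 0) {a : ι} (ha : z a = 0) : z = 0 := by
  classical
  by_contra! h
  obtain ⟨m, hm⟩ := Function.ne_iff.1 h
  have hxm : x m ≠ x a := fun e => hm ((hz m a e).trans ha)
  have hz' : ∀ j, z j = if x j = x a then 0 else z m := fun j => by
    split_ifs with hj
    · exact (hz j a hj).trans ha
    · exact hz j m ((hx.eq_or_eq hxm.symm j).resolve_left hj)
  have hcard : (Finset.univ.filter fun j => x j ≠ x a).card ≠ 0 :=
    Finset.card_ne_zero_of_mem (Finset.mem_filter.2 ⟨Finset.mem_univ _, hxm⟩)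
  rw [Finset.sum_congr rfl fun j _ => hz' j, Finset.sum_ite, Finset.sum_const_zero, zero_add,
    Finset.sum_const, nsmul_eq_mul] at hs
  exact mul_ne_zero (Nat.cast_ne_zero.2 hcard) hm hs

end TwoValued

section BlockVector

variable {ι R : Type*} [Fintype ι] [DecidableEq ι]

def blockVec [Ring R] (S : Finset ι) : ι → R :=
  fun m => (if m ∈ S then (Fintype.card ι : R) else 0) - S.card

lemma sum_blockVec [Ring R] (S : Finset ι) : ∑ m, blockVec (R := R) S m = 0 := by
  simp only [blockVec, Finset.sum_sub_distrib, Finset.sum_ite_mem, Finset.univ_inter,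
    Finset.sum_const, Finset.card_univ, nsmul_eq_mul]
  exact sub_eq_zero.2 (Nat.cast_comm _ _)

lemma twoValued_blockVec [Ring R] (S : Finset ι) : TwoValued (blockVec (R := R) S) := by
  intro i j l
  simp only [blockVec]
  split_ifs <;> simp

lemma blockVec_eq_blockVec_iff [Ring R] [CharZero R] (S : Finset ι) (a b : ι) :
    blockVec (R := R) S a = blockVec S b ↔ (a ∈ S ↔ b ∈ S) := by
  have : (Fintype.card ι : R) ≠ 0 := Nat.cast_ne_zero.2 (Fintype.card_pos_iff.2 ⟨a⟩).ne'
  simp only [blockVec]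
  split_ifs <;> simp_all [eq_comm]

end BlockVector

section Matching

open SimpleGraph

variable {ι R : Type*}

def IsMatchingGraph (M : SimpleGraph ι) : Prop :=
  ∀ ⦃a b c⦄, M.Adj a b → M.Adj a c → b = c

def Separates (M : SimpleGraph ι) (x : ι → R) : Prop :=
  ∀ ⦃a b⦄, M.Adj a b → x a ≠ x b

lemma isMatchingGraph_edge (a b : ι) : IsMatchingGraph (edge a b) := by
  intro _ _ _
  grind

lemma separates_edge_iff {a b : ι} (hab : a ≠ b) {x : ι → R} :
    Separates (edge a b) x ↔ x a ≠ x b := by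
  refine ⟨fun h => h ((edge_adj ..).2 ⟨Or.inl ⟨rfl, rfl⟩, hab⟩), fun h c d hcd => ?_⟩
  grind

lemma separates_comap_iff (M : SimpleGraph ι) (σ : Equiv.Perm ι) (x : ι → R) :
    Separates (M.comap σ) (x ∘ σ) ↔ Separates M x := by
  refine ⟨fun h a b hab => ?_, fun h a b hab => h hab⟩
  simpa using @h (σ.symm a) (σ.symm b) (by simpa using hab)

/-- With `s_i = (I J)`, this is the matching `M'` with `i · W(M) = W(M')`. -/
def dotGraph (I J : ι) (M : SimpleGraph ι) : SimpleGraph ι :=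
  fromRel fun a b => (a = I ∧ b = J) ∨
    (M.Adj a b ∧ a ≠ I ∧ a ≠ J ∧ b ≠ I ∧ b ≠ J) ∨ (M.Adj I a ∧ M.Adj J b)

lemma dotGraph_adj_self {I J : ι} (hIJ : I ≠ J) (M : SimpleGraph ι) : (dotGraph I J M).Adj I J :=
  (fromRel_adj ..).2 ⟨hIJ, Or.inl (Or.inl ⟨rfl, rfl⟩)⟩

lemma IsMatchingGraph.dotGraph {M : SimpleGraph ι} (hM : IsMatchingGraph M) (I J : ι) :
    IsMatchingGraph (dotGraph I J M) := by
  intro a b c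
  have hsymm : ∀ a b, M.Adj a b → M.Adj b a := fun _ _ h => h.symm
  have hirrefl : ∀ a, ¬M.Adj a a := fun _ => M.irrefl
  unfold IsMatchingGraph at hM
  simp only [TLpaper.dotGraph, fromRel_adj]
  grind

variable [DecidableEq ι]

lemma separates_dotGraph_iff {M : SimpleGraph ι} (hM : IsMatchingGraph M) {I J : ι}
    {x : ι → R} (hx : TwoValued x) (hIJ : x I ≠ x J) :
    Separates (dotGraph I J M) x ↔
      Separates M x ∨ Separates (M.comap (Equiv.swap I J)) x := by
  have hval := hx.eq_or_eq hIJ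
  have hIneJ : I ≠ J := fun h => hIJ (h ▸ rfl)
  have hsymm : ∀ a b, M.Adj a b → M.Adj b a := fun _ _ h => h.symm
  have hirrefl : ∀ a, ¬M.Adj a a := fun _ => M.irrefl
  unfold IsMatchingGraph at hM
  simp only [Separates, TLpaper.dotGraph, fromRel_adj, comap_adj]
  constructor
  · intro h
    by_cases hsep : (∀ u, M.Adj I u → x u ≠ x I) ∧ (∀ v, M.Adj J v → x v ≠ x J)
    · left
      grind
    · right
      -- a partner of `I` or `J` has the colour of its endpoint; as `x` separates the two
      -- partners, so does the other one
      have hnotIJ : ¬M.Adj I J := by grind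
      have hpartner : (∀ u, M.Adj I u → x u = x I) ∧ (∀ v, M.Adj J v → x v = x J) := by grind
      clear hsep
      grind
  · rintro (h | h) a b hab <;> grind

lemma IsMatchingGraph.exists_separates [Fintype ι] [LinearOrder ι] [Ring R] [CharZero R]
    {M : SimpleGraph ι} (hM : IsMatchingGraph M) (A : Finset ι)
    (hA : ∀ a ∈ A, ∀ b ∈ A, ¬M.Adj a b) :
    ∃ x : ι → R, ∑ i, x i = 0 ∧ TwoValued x ∧ Separates M x ∧ ∀ a ∈ A, ∀ b ∈ A, x a = x b := by
  classical
  -- `S` is `A` together with the smaller endpoint of each edge avoiding `A`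
  set S := A ∪ Finset.univ.filter fun m => ∃ e, M.Adj m e ∧ m < e ∧ e ∉ A
  have hsymm : ∀ a b, M.Adj a b → M.Adj b a := fun _ _ h => h.symm
  unfold IsMatchingGraph at hM
  refine ⟨blockVec S, sum_blockVec S, twoValued_blockVec S, fun a b hab => ?_,
    fun a ha b hb => (blockVec_eq_blockVec_iff S a b).2 (by simp [S, ha, hb])⟩
  rw [Ne, blockVec_eq_blockVec_iff]
  simp only [S, Finset.mem_union, Finset.mem_filter, Finset.mem_univ, true_and]
  rcases lt_or_gt_of_ne (M.ne_of_adj hab) with h | h <;> grind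

end Matching

section Transpositions

variable {ι : Type} [DecidableEq ι]

def transpositions (M : SimpleGraph ι) : Set (Equiv.Perm ι) :=
  {t | ∃ a b, M.Adj a b ∧ t = Equiv.swap a b}

def transpositionGraph (Q : Set (Equiv.Perm ι)) : SimpleGraph ι where
  Adj a b := a ≠ b ∧ Equiv.swap a b ∈ Q
  symm := ⟨fun a b h => ⟨h.1.symm, Equiv.swap_comm a b ▸ h.2⟩⟩
  loopless := ⟨fun _ h => h.1 rfl⟩

lemma transpositionGraph_adj {Q : Set (Equiv.Perm ι)} {a b : ι} :
    (transpositionGraph Q).Adj a b ↔ a ≠ b ∧ Equiv.swap a b ∈ Q :=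
  Iff.rfl

lemma transpositions_transpositionGraph {Q : Set (Equiv.Perm ι)}
    (hQ : ∀ t ∈ Q, IsTransposition t) : transpositions (transpositionGraph Q) = Q := by
  ext t
  refine ⟨fun ⟨a, b, hab, ht⟩ => ht ▸ (transpositionGraph_adj.1 hab).2, fun ht => ?_⟩
  obtain ⟨a, b, hab, rfl⟩ := hQ t ht
  exact ⟨a, b, transpositionGraph_adj.2 ⟨hab, ht⟩, rfl⟩

lemma isMatchingGraph_transpositionGraph {Q : Set (Equiv.Perm ι)}
    (hQ : ∀ t ∈ Q, ∀ t' ∈ Q, t * t' = t' * t) : IsMatchingGraph (transpositionGraph Q) := by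
  intro a b c hb hc
  simp only [transpositionGraph_adj] at hb hc
  obtain ⟨hab, hb⟩ := hb
  obtain ⟨hac, hc⟩ := hc
  by_contra hbc
  have := congrArg (· a) (hQ _ hb _ hc)
  simp only [Equiv.Perm.mul_apply, Equiv.swap_apply_left] at this
  rw [Equiv.swap_apply_of_ne_of_ne hac.symm (Ne.symm hbc),
    Equiv.swap_apply_of_ne_of_ne hab.symm hbc] at this
  exact hbc this.symm

lemma IsMatchingGraph.swap_mul_comm {M : SimpleGraph ι} (hM : IsMatchingGraph M) {a b c d : ι}
    (hab : M.Adj a b) (hcd : M.Adj c d) :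
    Equiv.swap a b * Equiv.swap c d = Equiv.swap c d * Equiv.swap a b := by
  have hsymm : ∀ a b, M.Adj a b → M.Adj b a := fun _ _ h => h.symm
  unfold IsMatchingGraph at hM
  ext m
  simp only [Equiv.Perm.mul_apply, Equiv.swap_apply_def]
  grind

end Transpositions

section SeparatingSet

open SimpleGraph

variable {ι : Type*} [Fintype ι] (R : Type*) [AddCommMonoid R]

/-- The set `W(M)`: for `ι = Fin (n + 1)`, the points of `Z` separating each edge of `M`. -/
def separatingSet (M : SimpleGraph ι) : Set (ι → R) :=
  {x | x = 0 ∨ (∑ i, x i = 0 ∧ TwoValued x ∧ Separates M x)}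

variable {R}

lemma zero_mem_separatingSet (M : SimpleGraph ι) : (0 : ι → R) ∈ separatingSet R M :=
  Or.inl rfl

lemma mem_separatingSet_iff_of_ne_zero {M : SimpleGraph ι} {x : ι → R} (hx : x ≠ 0) :
    x ∈ separatingSet R M ↔ ∑ i, x i = 0 ∧ TwoValued x ∧ Separates M x :=
  or_iff_right hx

lemma separatingSet_subset_separatingSet_edge {M : SimpleGraph ι} {a b : ι} (hab : M.Adj a b) :
    separatingSet R M ⊆ separatingSet R (edge a b) := by
  rintro x (rfl | ⟨hs, hx, hM⟩)
  · exact zero_mem_separatingSet _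
  · exact Or.inr ⟨hs, hx, (separates_edge_iff (M.ne_of_adj hab)).2 (hM hab)⟩

lemma comp_mem_separatingSet_comap_iff (M : SimpleGraph ι) (σ : Equiv.Perm ι) (x : ι → R) :
    x ∘ σ ∈ separatingSet R (M.comap σ) ↔ x ∈ separatingSet R M := by
  have hzero : x ∘ σ = 0 ↔ x = 0 :=
    ⟨fun h => by simpa [Function.comp_assoc] using congrArg (· ∘ σ.symm) h, fun h => by simp [h]⟩
  have hsum : ∑ i, (x ∘ σ) i = ∑ i, x i := Equiv.sum_comp σ x
  simp only [separatingSet, Set.mem_ofPred_eq, hzero, hsum, twoValued_comp_equiv_iff,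
    separates_comap_iff]

lemma separatingSet_edge_inter_union_comap [DecidableEq ι] {M : SimpleGraph ι}
    (hM : IsMatchingGraph M) {I J : ι} (hIJ : I ≠ J) :
    separatingSet R (edge I J) ∩
        (separatingSet R M ∪ separatingSet R (M.comap (Equiv.swap I J))) =
      separatingSet R (dotGraph I J M) := by
  ext x
  rcases eq_or_ne x 0 with rfl | hx0
  · simp [zero_mem_separatingSet]
  simp only [Set.mem_inter_iff, Set.mem_union, mem_separatingSet_iff_of_ne_zero hx0,
    separates_edge_iff hIJ]
  constructor
  · rintro ⟨⟨hs, hx, hIJx⟩, h⟩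
    exact ⟨hs, hx, (separates_dotGraph_iff hM hx hIJx).2 (h.imp (·.2.2) (·.2.2))⟩
  · rintro ⟨hs, hx, hsep⟩
    have hIJx := hsep (dotGraph_adj_self hIJ M)
    exact ⟨⟨hs, hx, hIJx⟩,
      ((separates_dotGraph_iff hM hx hIJx).1 hsep).imp (⟨hs, hx, ·⟩) (⟨hs, hx, ·⟩)⟩

end SeparatingSet

section SeparatingVector

open SimpleGraph

variable {ι R : Type*} [Fintype ι] [Ring R] [CharZero R]

lemma separatingSet_ne_univ [Nonempty ι] (M : SimpleGraph ι) : separatingSet R M ≠ Set.univ := by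
  intro h
  have : (1 : ι → R) ∈ separatingSet R M := h ▸ Set.mem_univ _
  rcases this with h1 | ⟨hs, -⟩
  · exact one_ne_zero (congrFun h1 (Classical.arbitrary ι))
  · simp [Fintype.card_ne_zero] at hs

variable [LinearOrder ι]

lemma IsMatchingGraph.exists_ne_zero_mem_separatingSet {M : SimpleGraph ι}
    (hM : IsMatchingGraph M) {a₀ b₀ : ι} (hM₀ : M.Adj a₀ b₀) (A : Finset ι)
    (hA : ∀ a ∈ A, ∀ b ∈ A, ¬M.Adj a b) :
    ∃ x ∈ separatingSet R M, x ≠ 0 ∧ ∀ a ∈ A, ∀ b ∈ A, x a = x b := by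
  obtain ⟨x, hs, hx, hsep, hA⟩ := hM.exists_separates (R := R) A hA
  exact ⟨x, Or.inr ⟨hs, hx, hsep⟩, fun h => hsep hM₀ (by simp [h]), hA⟩

lemma IsMatchingGraph.separatingSet_ne_singleton_zero {M : SimpleGraph ι}
    (hM : IsMatchingGraph M) {a₀ b₀ : ι} (hM₀ : M.Adj a₀ b₀) : separatingSet R M ≠ {0} := by
  obtain ⟨x, hxM, hx0, -⟩ := hM.exists_ne_zero_mem_separatingSet (R := R) hM₀ ∅ (by simp)
  exact fun h => hx0 (by simpa [h] using hxM)

end SeparatingVector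

section WeylLines

open SimpleGraph

variable {K : Type} [Field K] {n : ℕ}

lemma mem_Hyp_swap_iff {a b : Fin (n + 1)} {x : Fin (n + 1) → K} :
    x ∈ Hyp K n (Equiv.swap a b) ↔ ∑ i, x i = 0 ∧ x a = x b := by
  refine and_congr_right fun _ => ⟨fun h => by simpa using (h a).symm, fun h m => ?_⟩
  rw [Equiv.swap_apply_def]
  split_ifs <;> simp_all

lemma permSet_separatingSet (σ : Equiv.Perm (Fin (n + 1))) (M : SimpleGraph (Fin (n + 1))) :
    permSet K n σ (separatingSet K M) = separatingSet K (M.comap σ) := by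
  ext y
  refine ⟨?_, fun hy => ⟨y ∘ σ.symm, ?_, by simp [Function.comp_assoc]⟩⟩
  · rintro ⟨x, hx, rfl⟩
    exact (comp_mem_separatingSet_comap_iff M σ x).2 hx
  · rwa [← comp_mem_separatingSet_comap_iff M σ, Function.comp_assoc, Equiv.symm_comp_self,
      Function.comp_id]

variable [CharZero K]

/-- The coordinatewise square of a spanning vector `v`, projected to `V`, is fixed by the same
transpositions as `v`, hence lies on the line: so the values of `v` are the roots of a quadratic. -/
lemma IsWeylLine.sum_eq_zero_and_twoValued {L : Set (Fin (n + 1) → K)} (hL : IsWeylLine K n L)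
    {x : Fin (n + 1) → K} (hx : x ∈ L) : ∑ i, x i = 0 ∧ TwoValued x := by
  obtain ⟨⟨v, -, rfl⟩, T, -, hLT⟩ := hL
  refine ⟨(hLT ▸ hx).1, ?_⟩
  obtain ⟨c, rfl⟩ := hx
  refine TwoValued.smul ?_ c
  have hv : v ∈ {x | ∑ i, x i = 0} ∩ ⋂ t ∈ T, Hyp K n t := hLT ▸ ⟨1, one_smul K v⟩
  set μ : K := (∑ i, v i ^ 2) / (n + 1)
  have hw : (fun i => v i ^ 2 - μ) ∈ Set.range fun c : K => c • v := by
    have hs : ∑ i, (v i ^ 2 - μ) = 0 := by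
      have : (n + 1 : K) ≠ 0 := Nat.cast_add_one_ne_zero n
      simp only [Finset.sum_sub_distrib, Finset.sum_const, Finset.card_univ, Fintype.card_fin,
        nsmul_eq_mul, μ]
      push_cast
      field_simp
      ring
    rw [hLT]
    refine ⟨hs, Set.mem_iInter₂.2 fun t ht => ⟨hs, fun i => ?_⟩⟩
    simp only [(Set.mem_iInter₂.1 hv.2 t ht).2 i]
  obtain ⟨c, hc⟩ := hw
  exact twoValued_of_sq_sub_eq_mul fun m => (congrFun hc m).symm

lemma isWeylLine_range_smul {x : Fin (n + 1) → K} (hx0 : x ≠ 0) (hs : ∑ i, x i = 0)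
    (hx : TwoValued x) : IsWeylLine K n (Set.range fun c : K => c • x) := by
  refine ⟨⟨x, hx0, rfl⟩, {t | ∃ a b, a ≠ b ∧ x a = x b ∧ t = Equiv.swap a b}, ?_, ?_⟩
  · rintro t ⟨a, b, hab, -, rfl⟩
    exact ⟨a, b, hab, rfl⟩
  ext y
  simp only [Set.mem_inter_iff, Set.mem_iInter₂, Set.mem_ofPred_eq]
  constructor
  · rintro ⟨c, rfl⟩
    have hcs : ∑ i, (c • x) i = 0 := by simp [← Finset.mul_sum, hs]
    exact ⟨hcs, fun t ⟨a, b, _, hab, ht⟩ => ht ▸ mem_Hyp_swap_iff.2 ⟨hcs, by simp [hab]⟩⟩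
  · rintro ⟨hys, hyT⟩
    have hy : ∀ a b, x a = x b → y a = y b := fun a b hab => by
      rcases eq_or_ne a b with rfl | hne
      · rfl
      · exact (mem_Hyp_swap_iff.1 (hyT _ ⟨a, b, hne, hab, rfl⟩)).2
    obtain ⟨a, ha⟩ : ∃ a, x a ≠ 0 := Function.ne_iff.1 hx0
    have hz : x a • y - y a • x = 0 := hx.eq_zero_of_sum_eq_zero (a := a)
      (fun b c hbc => by simp [hbc, hy b c hbc])
      (by simp [Finset.sum_sub_distrib, ← Finset.mul_sum, hs, hys]) (by simp [mul_comm])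
    refine ⟨y a / x a, funext fun m => ?_⟩
    have := congrFun hz m
    simp only [Pi.sub_apply, Pi.smul_apply, smul_eq_mul, Pi.zero_apply] at this ⊢
    field_simp
    linear_combination -this

lemma smul_mem_Vt_swap {a b : Fin (n + 1)} {x : Fin (n + 1) → K} (hs : ∑ i, x i = 0)
    (hx : TwoValued x) (hab : x a ≠ x b) (c : K) : c • x ∈ Vt K n (Equiv.swap a b) := by
  have hx0 : x ≠ 0 := fun h => hab (by simp [h])
  simp only [Vt, Set.mem_iUnion₂]
  exact ⟨_, ⟨isWeylLine_range_smul hx0 hs hx,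
    fun h => hab (mem_Hyp_swap_iff.1 (h ⟨1, one_smul K x⟩)).2⟩, c, rfl⟩

lemma Vt_swap_eq_separatingSet_edge {a b : Fin (n + 1)} (hab : a ≠ b) :
    Vt K n (Equiv.swap a b) = separatingSet K (edge a b) := by
  ext x
  rw [separatingSet, Set.mem_ofPred_eq, separates_edge_iff hab]
  constructor
  · intro hx
    simp only [Vt, Set.mem_iUnion₂, Set.mem_ofPred_eq] at hx
    obtain ⟨L, ⟨hL, hLH⟩, hxL⟩ := hx
    refine or_iff_not_imp_left.2 fun hx0 => ?_
    obtain ⟨hs, hx⟩ := hL.sum_eq_zero_and_twoValued hxL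
    refine ⟨hs, hx, fun hxab => hLH fun y hy => ?_⟩
    refine mem_Hyp_swap_iff.2 ⟨(hL.sum_eq_zero_and_twoValued hy).1, ?_⟩
    obtain ⟨⟨v, -, rfl⟩, -⟩ := hL
    obtain ⟨c, rfl⟩ := hxL
    obtain ⟨d, rfl⟩ := hy
    have hc : c ≠ 0 := by rintro rfl; simp at hx0
    simp only [Pi.smul_apply, smul_eq_mul] at hxab ⊢
    rw [mul_left_cancel₀ hc hxab]
  · rintro (rfl | ⟨hs, hx, hxab⟩)
    · simpa using smul_mem_Vt_swap (sum_blockVec {a}) (twoValued_blockVec {a})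
        (by simp [blockVec_eq_blockVec_iff, hab.symm]) (0 : K)
    · simpa using smul_mem_Vt_swap hs hx hxab 1

end WeylLines

section Family

open SimpleGraph

variable {K : Type} [Field K] [CharZero K] {n : ℕ}

open Fin.NatCast in
lemma exists_simple_eq_swap {i : ℕ} (hi : i < n) :
    ∃ I J : Fin (n + 1), I ≠ J ∧ simple n i = Equiv.swap I J := by
  refine ⟨_, _, fun h => ?_, rfl⟩
  have := congrArg Fin.val h
  rw [Fin.val_cast_of_lt (by omega), Fin.val_cast_of_lt (by omega)] at this
  omega

lemma dotAct_separatingSet {i : ℕ} {I J : Fin (n + 1)} (hIJ : I ≠ J)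
    (hi : simple n i = Equiv.swap I J) {M : SimpleGraph (Fin (n + 1))} (hM : IsMatchingGraph M) :
    dotAct K n i (separatingSet K M) = separatingSet K (dotGraph I J M) := by
  rw [dotAct, Vi, hi, Vt_swap_eq_separatingSet_edge hIJ, permSet_separatingSet,
    separatingSet_edge_inter_union_comap hM hIJ]

lemma exists_seqSet_eq_separatingSet : ∀ l : List ℕ, l ≠ [] → (∀ i ∈ l, i < n) →
    ∃ M : SimpleGraph (Fin (n + 1)), IsMatchingGraph M ∧ (∃ a b, M.Adj a b) ∧
      seqSet K n l = separatingSet K M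
  | [], h, _ => absurd rfl h
  | [i], _, hl => by
    obtain ⟨I, J, hIJ, hi⟩ := exists_simple_eq_swap (hl i (List.mem_singleton_self i))
    exact ⟨edge I J, isMatchingGraph_edge I J, ⟨I, J, (edge_adj ..).2 ⟨Or.inl ⟨rfl, rfl⟩, hIJ⟩⟩,
      by rw [seqSet, Vi, hi, Vt_swap_eq_separatingSet_edge hIJ]⟩
  | i :: j :: l, _, hl => by
    obtain ⟨I, J, hIJ, hi⟩ := exists_simple_eq_swap (hl i List.mem_cons_self)
    obtain ⟨M, hM, -, hMl⟩ := exists_seqSet_eq_separatingSet (j :: l) (List.cons_ne_nil j l)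
      fun m hm => hl m (List.mem_cons_of_mem i hm)
    exact ⟨dotGraph I J M, hM.dotGraph I J, ⟨I, J, dotGraph_adj_self hIJ M⟩,
      by rw [seqSet, hMl, dotAct_separatingSet hIJ hi hM]⟩

lemma separatingSet_eq_iInter_Vt {M : SimpleGraph (Fin (n + 1))} {a₀ b₀ : Fin (n + 1)}
    (hM₀ : M.Adj a₀ b₀) : separatingSet K M = ⋂ t ∈ transpositions M, Vt K n t := by
  ext x
  simp only [Set.mem_iInter₂]
  refine ⟨fun hx t ⟨a, b, hab, ht⟩ => ?_, fun h => ?_⟩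
  · rw [ht, Vt_swap_eq_separatingSet_edge (M.ne_of_adj hab)]
    exact separatingSet_subset_separatingSet_edge hab hx
  rcases eq_or_ne x 0 with rfl | hx0
  · exact zero_mem_separatingSet M
  have hedge : ∀ a b, M.Adj a b → ∑ i, x i = 0 ∧ TwoValued x ∧ x a ≠ x b := fun a b hab => by
    have := h _ ⟨a, b, hab, rfl⟩
    rwa [Vt_swap_eq_separatingSet_edge (M.ne_of_adj hab), mem_separatingSet_iff_of_ne_zero hx0,
      separates_edge_iff (M.ne_of_adj hab)] at this
  obtain ⟨hs, hx, -⟩ := hedge _ _ hM₀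
  exact Or.inr ⟨hs, hx, fun a b hab => (hedge a b hab).2.2⟩

lemma setOf_separatingSet_subset_Vt_eq {M : SimpleGraph (Fin (n + 1))} (hM : IsMatchingGraph M)
    {a₀ b₀ : Fin (n + 1)} (hM₀ : M.Adj a₀ b₀) :
    {t | IsTransposition t ∧ separatingSet K M ⊆ Vt K n t} = transpositions M := by
  ext t
  constructor
  · rintro ⟨⟨a, b, hab, rfl⟩, hsub⟩
    by_contra hnot
    have hA : ∀ c ∈ ({a, b} : Finset _), ∀ d ∈ ({a, b} : Finset _), ¬M.Adj c d := by
      simp only [Finset.mem_insert, Finset.mem_singleton]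
      rintro c (rfl | rfl) d (rfl | rfl) h
      exacts [M.irrefl h, hnot ⟨_, _, h, rfl⟩, hnot ⟨_, _, h.symm, rfl⟩, M.irrefl h]
    obtain ⟨x, hxM, hx0, hxab⟩ := hM.exists_ne_zero_mem_separatingSet (R := K) hM₀ {a, b} hA
    have := hsub hxM
    rw [Vt_swap_eq_separatingSet_edge hab, mem_separatingSet_iff_of_ne_zero hx0, separates_edge_iff hab] at this
    exact this.2.2 (hxab a (by simp) b (by simp))
  · rintro ⟨a, b, hab, rfl⟩
    refine ⟨⟨a, b, M.ne_of_adj hab, rfl⟩, ?_⟩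
    rw [Vt_swap_eq_separatingSet_edge (M.ne_of_adj hab)]
    exact separatingSet_subset_separatingSet_edge hab

lemma IsMatchingGraph.commTranspositions {M : SimpleGraph (Fin (n + 1))}
    (hM : IsMatchingGraph M) : CommTranspositions n (transpositions M) :=
  ⟨fun _ ⟨a, b, hab, ht⟩ => ⟨a, b, M.ne_of_adj hab, ht⟩,
    fun _ ⟨_, _, hab, ht⟩ _ ⟨_, _, hcd, ht'⟩ => ht ▸ ht' ▸ hM.swap_mul_comm hab hcd⟩

lemma CommTranspositions.eq_setOf {Q : Set (Equiv.Perm (Fin (n + 1)))}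
    (hQ : CommTranspositions n Q) (hQne : Q.Nonempty) :
    Q = {t | IsTransposition t ∧ (⋂ s ∈ Q, Vt K n s) ⊆ Vt K n t} := by
  obtain ⟨_, ht₀⟩ := hQne
  obtain ⟨a₀, b₀, hab₀, rfl⟩ := hQ.1 _ ht₀
  have hM₀ : (transpositionGraph Q).Adj a₀ b₀ := transpositionGraph_adj.2 ⟨hab₀, ht₀⟩
  rw [← transpositions_transpositionGraph hQ.1, ← separatingSet_eq_iInter_Vt hM₀,
    setOf_separatingSet_subset_Vt_eq (isMatchingGraph_transpositionGraph hQ.2) hM₀]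

end Family

theorem exists_unique_commuting_set
    (W : Set (Fin (n + 1) → k)) (hW : memVn k n W) :
    W ≠ {0} ∧
    (∃! Q : Set (Equiv.Perm (Fin (n + 1))),
      CommTranspositions n Q ∧ W = ⋂ t ∈ Q, Vt k n t) ∧
    (CommTranspositions n {t | IsTransposition t ∧ W ⊆ Vt k n t} ∧
      W = ⋂ t ∈ {t | IsTransposition t ∧ W ⊆ Vt k n t}, Vt k n t) := by
  obtain ⟨l, hl, hln, rfl⟩ := hW
  obtain ⟨M, hM, ⟨a₀, b₀, hM₀⟩, hlM⟩ := exists_seqSet_eq_separatingSet (K := k) l hl hln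
  rw [hlM]
  have hT := hM.commTranspositions
  have hMT := separatingSet_eq_iInter_Vt (K := k) hM₀
  have hTM := setOf_separatingSet_subset_Vt_eq (K := k) hM hM₀
  refine ⟨hM.separatingSet_ne_singleton_zero hM₀, ⟨transpositions M, ⟨hT, hMT⟩, ?_⟩,
    hTM ▸ ⟨hT, hMT⟩⟩
  rintro Q ⟨hQ, hMQ⟩
  have hQne : Q.Nonempty := Set.nonempty_iff_ne_empty.2 fun h =>
    separatingSet_ne_univ M (by simpa [h] using hMQ)
  rw [hQ.eq_setOf (K := k) hQne, ← hMQ, hTM]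

end TLpaper
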